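/- Let m ≥ 1, let α₁, …, α_m ∈ (0, π), and let r₀, r₁, …, r_m > 0 and ρ₀, ρ₁, …, ρ_m > 0 satisfy the closing conditions ∑_{j=1}^m f_{α_j}(log r_j − log r₀) = π and ∑_{j=1}^m f_{α_j}(log ρ_j − log ρ₀) = π. Assume r_j ≥ r₀·cos α_j and ρ_j ≥ ρ₀·cos α_j for all j, and set c_j = sin α_j / ((ρ_j/ρ₀) + (ρ₀/ρ_j) − 2·cos α_j). Then ∑_{j=1}^m c_j·(r_j/ρ_j) ≥ (r₀/ρ₀)·∑_{j=1}^m c_j. If moreover ∑_{j=1}^m (π − α_j) = 2π and additionally r₀ ≥ r_j·cos α_j and ρ₀ ≥ ρ_j·cos α_j for all j, then also ∑_{j=1}^m c_j·(ρ_j/r_j) ≥ (ρ₀/r₀)·∑_{j=1}^m c_j. -/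

import Mathlib

/-!
Write `t = exp x`. Then `fAngle θ x = π / 2 - arctan ((t⁻¹ - cos θ) / sin θ)`, whose derivative
in `t` is `sin θ / (t² - 2 t cos θ + 1)`. This decreases for `t ≥ cos θ`, so `t ↦ fAngle θ (log t)`
is concave there, and the convexity hypotheses put both `r_j / r₀` and `ρ_j / ρ₀` in that region.
Subtracting the two closing conditions and bounding each term by the tangent line at `ρ_j / ρ₀`
gives `0 ≤ ∑ c_j (r_j ρ₀ / (ρ_j r₀) - 1)`, because the derivative at `t = ρ_j / ρ₀` is `c_j / t`.

For the second inequality, `fAngle θ x + fAngle θ (-x) = π - θ` (the angles at `1` and at `e^{x+iθ}`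
of the triangle with vertices `0, 1, e^{x+iθ}`), so when `∑ (π - α_j) = 2π` the reciprocal radii
`1 / r` and `1 / ρ` satisfy the closing condition as well. Since `c_j` is unchanged under
`ρ_j / ρ₀ ↦ ρ₀ / ρ_j`, the first inequality applied to them is the second one.
-/

/-- The function `f_θ(x) = −arg(1 − exp(x + iθ))`, realizing the paper's
`f_θ(x) = (1/(2i))·log((1 − e^{x−iθ})/(1 − e^{x+iθ}))` with the branch of the
logarithm chosen so that `0 < f_θ < π`. -/
noncomputable def fAngle (θ x : ℝ) : ℝ :=
  -Complex.arg (1 - Complex.exp (x + θ * Complex.I))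

open Real Set

theorem Complex.arg_eq_arctan_sub_pi_div_two {z : ℂ} (hz : z.im < 0) :
    z.arg = Real.arctan (z.re / -z.im) - π / 2 := by
  have hz₀ : z ≠ 0 := fun h => by simp [h] at hz
  have hnorm : ‖z‖ ≠ 0 := norm_ne_zero_iff.2 hz₀
  have htan : Real.tan (z.arg + π / 2) = z.re / -z.im := by
    rw [Real.tan_eq_sin_div_cos, Real.sin_add_pi_div_two, Real.cos_add_pi_div_two, Complex.sin_arg,
      Complex.cos_arg hz₀]
    field_simp
  have hlow := Complex.neg_pi_lt_arg z
  have hup := Complex.arg_neg_iff.2 hz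
  linarith [Real.arctan_eq_of_tan_eq htan ⟨by linarith, by linarith⟩]

noncomputable def kiteAngle (θ t : ℝ) : ℝ :=
  π / 2 - arctan ((t⁻¹ - cos θ) / sin θ)

theorem fAngle_eq_kiteAngle_exp {θ : ℝ} (hθ : 0 < sin θ) (x : ℝ) :
    fAngle θ x = kiteAngle θ (exp x) := by
  have hz : 1 - Complex.exp (x + θ * Complex.I) =
      ⟨1 - exp x * cos θ, -(exp x * sin θ)⟩ := by
    apply Complex.ext <;> simp [Complex.exp_re, Complex.exp_im]
  have him : -(exp x * sin θ) < 0 := neg_neg_of_pos (by positivity)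
  rw [fAngle, kiteAngle, hz, Complex.arg_eq_arctan_sub_pi_div_two him]
  have : (1 - exp x * cos θ) / - -(exp x * sin θ) = ((exp x)⁻¹ - cos θ) / sin θ := by
    field_simp
  simp only [this]
  ring

theorem sq_sub_two_mul_cos_add_one_pos {θ : ℝ} (hθ : 0 < sin θ) (t : ℝ) :
    0 < t ^ 2 - 2 * t * cos θ + 1 := by
  nlinarith [sin_sq_add_cos_sq θ, sq_nonneg (t - cos θ)]

theorem hasDerivAt_kiteAngle {θ t : ℝ} (hθ : 0 < sin θ) (ht : 0 < t) :
    HasDerivAt (kiteAngle θ) (sin θ / (t ^ 2 - 2 * t * cos θ + 1)) t := by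
  have h := ((((hasDerivAt_inv ht.ne').sub_const (cos θ)).div_const (sin θ)).arctan).const_sub
    (π / 2)
  refine h.congr_deriv ?_
  have hq : (1 + ((t⁻¹ - cos θ) / sin θ) ^ 2) * t ^ 2 * sin θ ^ 2 =
      t ^ 2 - 2 * t * cos θ + 1 := by
    field_simp
    linear_combination t ^ 2 * sin_sq_add_cos_sq θ
  rw [← hq]
  field_simp

theorem arctan_one_sub_cos_div_sin {θ : ℝ} (hθ₀ : 0 < θ) (hθπ : θ < π) :
    arctan ((1 - cos θ) / sin θ) = θ / 2 := by
  refine arctan_eq_of_tan_eq ?_ ⟨by linarith, by linarith⟩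
  have hc : 0 < cos (θ / 2) := cos_pos_of_mem_Ioo ⟨by linarith, by linarith⟩
  have hs : 0 < sin (θ / 2) := sin_pos_of_pos_of_lt_pi (by linarith) (by linarith)
  rw [show θ = 2 * (θ / 2) by ring, sin_two_mul, cos_two_mul, tan_eq_sin_div_cos]
  field_simp
  nlinarith [sin_sq_add_cos_sq (θ / 2)]

theorem kiteAngle_add_kiteAngle_inv {θ t : ℝ} (hθ₀ : 0 < θ) (hθπ : θ < π) (ht : 0 < t) :
    kiteAngle θ t + kiteAngle θ t⁻¹ = π - θ := by
  have hsin : 0 < sin θ := sin_pos_of_pos_of_lt_pi hθ₀ hθπ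
  have hderiv : ∀ s ∈ Ioi (0 : ℝ), HasDerivAt (fun s => kiteAngle θ s + kiteAngle θ s⁻¹) 0 s := by
    intro s hs
    have hs : 0 < s := hs
    refine ((hasDerivAt_kiteAngle hsin hs).add
      ((hasDerivAt_kiteAngle hsin (inv_pos.2 hs)).comp s (hasDerivAt_inv hs.ne'))).congr_deriv ?_
    have := sq_sub_two_mul_cos_add_one_pos hsin s
    have := sq_sub_two_mul_cos_add_one_pos hsin s⁻¹
    field_simp
    ring
  have hconst := isOpen_Ioi.is_const_of_deriv_eq_zero isPreconnected_Ioi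
    (fun s hs => (hderiv s hs).differentiableAt.differentiableWithinAt)
    (fun s hs => (hderiv s hs).deriv) ht (mem_Ioi.2 one_pos)
  rw [hconst]
  simp only [kiteAngle, inv_one]
  rw [arctan_one_sub_cos_div_sin hθ₀ hθπ]
  ring

theorem ConcaveOn.le_add_mul_sub_of_hasDerivAt {S : Set ℝ} {f : ℝ → ℝ} {x y f' : ℝ}
    (hf : ConcaveOn ℝ S f) (hx : x ∈ S) (hy : y ∈ S) (hf' : HasDerivAt f f' x) :
    f y ≤ f x + f' * (y - x) := by
  rcases lt_trichotomy y x with hyx | rfl | hxy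
  · have h := hf.le_slope_of_hasDerivAt hy hx hyx hf'
    rw [slope_def_field, le_div_iff₀ (sub_pos.2 hyx)] at h
    linarith
  · simp
  · have h := hf.slope_le_of_hasDerivAt hx hy hxy hf'
    rw [slope_def_field, div_le_iff₀ (sub_pos.2 hxy)] at h
    linarith

theorem concaveOn_kiteAngle {θ : ℝ} (hθ : 0 < sin θ) :
    ConcaveOn ℝ (Ioi 0 ∩ Ici (cos θ)) (kiteAngle θ) := by
  have hint : interior (Ioi 0 ∩ Ici (cos θ)) = Ioi 0 ∩ Ioi (cos θ) := by
    rw [interior_inter, interior_Ioi, interior_Ici]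
  refine AntitoneOn.concaveOn_of_deriv ((convex_Ioi 0).inter (convex_Ici _))
    (fun t ht => (hasDerivAt_kiteAngle hθ ht.1).continuousAt.continuousWithinAt) ?_ ?_ <;>
    rw [hint]
  · exact fun t ht => (hasDerivAt_kiteAngle hθ ht.1).differentiableAt.differentiableWithinAt
  · intro a ha b hb hab
    rw [(hasDerivAt_kiteAngle hθ ha.1).deriv, (hasDerivAt_kiteAngle hθ hb.1).deriv]
    exact div_le_div_of_nonneg_left hθ.le (sq_sub_two_mul_cos_add_one_pos hθ a)
      (by nlinarith [mem_Ioi.1 ha.2])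

noncomputable def kiteWeight (θ t : ℝ) : ℝ :=
  sin θ / (t + t⁻¹ - 2 * cos θ)

theorem kiteWeight_inv (θ t : ℝ) : kiteWeight θ t⁻¹ = kiteWeight θ t := by
  rw [kiteWeight, kiteWeight, inv_inv, add_comm t⁻¹ t]

theorem kiteAngle_le_add_kiteWeight_mul {θ s t : ℝ} (hθ : 0 < sin θ) (hs : 0 < s) (ht : 0 < t)
    (hcs : cos θ ≤ s) (hct : cos θ ≤ t) :
    kiteAngle θ s ≤ kiteAngle θ t + kiteWeight θ t * (s / t - 1) := by
  convert (concaveOn_kiteAngle hθ).le_add_mul_sub_of_hasDerivAt ⟨ht, hct⟩ ⟨hs, hcs⟩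
    (hasDerivAt_kiteAngle hθ ht) using 2
  rw [kiteWeight]
  field_simp
  ring

theorem sum_kiteWeight_le_sum_kiteWeight_mul_div {ι : Type*} [Fintype ι] {α s t : ι → ℝ}
    (hα : ∀ j, 0 < sin (α j)) (hs : ∀ j, 0 < s j) (ht : ∀ j, 0 < t j)
    (hcs : ∀ j, cos (α j) ≤ s j) (hct : ∀ j, cos (α j) ≤ t j)
    (hsum : ∑ j, kiteAngle (α j) (s j) = ∑ j, kiteAngle (α j) (t j)) :
    ∑ j, kiteWeight (α j) (t j) ≤ ∑ j, kiteWeight (α j) (t j) * (s j / t j) := by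
  have h := Finset.sum_le_sum fun j (_ : j ∈ Finset.univ) =>
    kiteAngle_le_add_kiteWeight_mul (hα j) (hs j) (ht j) (hcs j) (hct j)
  simp only [Finset.sum_add_distrib, mul_sub, mul_one, Finset.sum_sub_distrib, hsum] at h
  linarith

theorem fAngle_add_fAngle_neg {θ : ℝ} (hθ₀ : 0 < θ) (hθπ : θ < π) (x : ℝ) :
    fAngle θ x + fAngle θ (-x) = π - θ := by
  have hsin := sin_pos_of_pos_of_lt_pi hθ₀ hθπ
  rw [fAngle_eq_kiteAngle_exp hsin, fAngle_eq_kiteAngle_exp hsin, exp_neg]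
  exact kiteAngle_add_kiteAngle_inv hθ₀ hθπ (exp_pos x)

theorem sum_fAngle_neg_eq_pi {ι : Type*} [Fintype ι] {α x : ι → ℝ}
    (hα : ∀ j, 0 < α j ∧ α j < π) (hangle : ∑ j, (π - α j) = 2 * π)
    (hclose : ∑ j, fAngle (α j) (x j) = π) :
    ∑ j, fAngle (α j) (-x j) = π := by
  have h := Finset.sum_congr rfl fun j (_ : j ∈ Finset.univ) =>
    fAngle_add_fAngle_neg (hα j).1 (hα j).2 (x j)
  rw [Finset.sum_add_distrib, hclose, hangle] at h
  linarith

theorem mul_sum_kiteWeight_le_of_sum_fAngle_eq {ι : Type*} [Fintype ι] {α r ρ : ι → ℝ}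
    {r₀ ρ₀ : ℝ} (hα : ∀ j, 0 < sin (α j)) (hr₀ : 0 < r₀) (hρ₀ : 0 < ρ₀)
    (hr : ∀ j, 0 < r j) (hρ : ∀ j, 0 < ρ j)
    (hconvr : ∀ j, r₀ * cos (α j) ≤ r j) (hconvρ : ∀ j, ρ₀ * cos (α j) ≤ ρ j)
    (hclose : ∑ j, fAngle (α j) (log (r j) - log r₀) =
      ∑ j, fAngle (α j) (log (ρ j) - log ρ₀)) :
    r₀ / ρ₀ * ∑ j, kiteWeight (α j) (ρ j / ρ₀) ≤
      ∑ j, kiteWeight (α j) (ρ j / ρ₀) * (r j / ρ j) := by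
  have hexp : ∀ {a b : ℝ}, 0 < a → 0 < b → exp (log a - log b) = a / b := fun ha hb => by
    rw [exp_sub, exp_log ha, exp_log hb]
  simp only [fAngle_eq_kiteAngle_exp (hα _), hexp (hr _) hr₀, hexp (hρ _) hρ₀] at hclose
  have h := sum_kiteWeight_le_sum_kiteWeight_mul_div hα (fun j => div_pos (hr j) hr₀)
    (fun j => div_pos (hρ j) hρ₀) (fun j => (le_div_iff₀ hr₀).2 (by linarith [hconvr j]))
    (fun j => (le_div_iff₀ hρ₀).2 (by linarith [hconvρ j])) hclose
  have hratio : ∀ j, r j / r₀ / (ρ j / ρ₀) = ρ₀ / r₀ * (r j / ρ j) := fun j => by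
    field_simp
  simp only [hratio, mul_left_comm _ (ρ₀ / r₀), ← Finset.mul_sum] at h
  calc r₀ / ρ₀ * ∑ j, kiteWeight (α j) (ρ j / ρ₀)
      ≤ r₀ / ρ₀ * (ρ₀ / r₀ * ∑ j, kiteWeight (α j) (ρ j / ρ₀) * (r j / ρ j)) := by gcongr
    _ = _ := by field_simp

theorem subharmonicity_general_general (m : ℕ)
    (α : Fin m → ℝ) (hα : ∀ j, 0 < α j ∧ α j < Real.pi)
    (r ρ : Fin m → ℝ) (r₀ ρ₀ : ℝ)
    (hr₀ : 0 < r₀) (hρ₀ : 0 < ρ₀) (hr : ∀ j, 0 < r j) (hρ : ∀ j, 0 < ρ j)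
    (hcloser : ∑ j, fAngle (α j) (Real.log (r j) - Real.log r₀) = Real.pi)
    (hcloseρ : ∑ j, fAngle (α j) (Real.log (ρ j) - Real.log ρ₀) = Real.pi)
    (hconvr : ∀ j, r₀ * Real.cos (α j) ≤ r j)
    (hconvρ : ∀ j, ρ₀ * Real.cos (α j) ≤ ρ j)
    (c : Fin m → ℝ)
    (hc : ∀ j, c j = Real.sin (α j) / (ρ j / ρ₀ + ρ₀ / ρ j - 2 * Real.cos (α j))) :
    (∑ j, c j * (r j / ρ j) ≥ r₀ / ρ₀ * ∑ j, c j) ∧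
    ((∑ j, (Real.pi - α j) = 2 * Real.pi) →
      (∀ j, r j * Real.cos (α j) ≤ r₀) → (∀ j, ρ j * Real.cos (α j) ≤ ρ₀) →
      ∑ j, c j * (ρ j / r j) ≥ ρ₀ / r₀ * ∑ j, c j) := by
  have hsin : ∀ j, 0 < sin (α j) := fun j => sin_pos_of_pos_of_lt_pi (hα j).1 (hα j).2
  obtain rfl : c = fun j => kiteWeight (α j) (ρ j / ρ₀) := funext fun j => by
    rw [hc j, kiteWeight, inv_div]
  refine ⟨mul_sum_kiteWeight_le_of_sum_fAngle_eq hsin hr₀ hρ₀ hr hρ hconvr hconvρ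
    (hcloser.trans hcloseρ.symm), fun hangle hconvr' hconvρ' => ?_⟩
  have hclose_inv : ∀ {R : Fin m → ℝ} {R₀ : ℝ}, ∑ j, fAngle (α j) (log (R j) - log R₀) = π →
      ∑ j, fAngle (α j) (log (R j)⁻¹ - log R₀⁻¹) = π := fun h => by
    simpa only [log_inv, neg_sub_neg, neg_sub] using sum_fAngle_neg_eq_pi hα hangle h
  have hconv_inv : ∀ {R : Fin m → ℝ} {R₀ : ℝ}, 0 < R₀ → (∀ j, 0 < R j) →
      (∀ j, R j * cos (α j) ≤ R₀) → ∀ j, R₀⁻¹ * cos (α j) ≤ (R j)⁻¹ := fun hR₀ hR hconv j => by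
    rw [inv_mul_le_iff₀ hR₀, ← div_eq_mul_inv, le_div_iff₀ (hR j)]
    linarith [hconv j]
  have h := mul_sum_kiteWeight_le_of_sum_fAngle_eq hsin (inv_pos.2 hr₀) (inv_pos.2 hρ₀)
    (fun j => inv_pos.2 (hr j)) (fun j => inv_pos.2 (hρ j)) (hconv_inv hr₀ hr hconvr')
    (hconv_inv hρ₀ hρ hconvρ') ((hclose_inv hcloser).trans (hclose_inv hcloseρ).symm)
  simpa only [inv_div_inv, ← inv_div (ρ _) ρ₀, kiteWeight_inv] using h

theorem subharmonicity_general (m : ℕ) (hm : 1 ≤ m)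
    (α : Fin m → ℝ) (hα : ∀ j, 0 < α j ∧ α j < Real.pi)
    (r ρ : Fin m → ℝ) (r₀ ρ₀ : ℝ)
    (hr₀ : 0 < r₀) (hρ₀ : 0 < ρ₀) (hr : ∀ j, 0 < r j) (hρ : ∀ j, 0 < ρ j)
    (hcloser : ∑ j, fAngle (α j) (Real.log (r j) - Real.log r₀) = Real.pi)
    (hcloseρ : ∑ j, fAngle (α j) (Real.log (ρ j) - Real.log ρ₀) = Real.pi)
    (hconvr : ∀ j, r₀ * Real.cos (α j) ≤ r j)
    (hconvρ : ∀ j, ρ₀ * Real.cos (α j) ≤ ρ j)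
    (c : Fin m → ℝ)
    (hc : ∀ j, c j = Real.sin (α j) / (ρ j / ρ₀ + ρ₀ / ρ j - 2 * Real.cos (α j))) :
    (∑ j, c j * (r j / ρ j) ≥ r₀ / ρ₀ * ∑ j, c j) ∧
    ((∑ j, (Real.pi - α j) = 2 * Real.pi) →
      (∀ j, r j * Real.cos (α j) ≤ r₀) → (∀ j, ρ j * Real.cos (α j) ≤ ρ₀) →
      ∑ j, c j * (ρ j / r j) ≥ ρ₀ / r₀ * ∑ j, c j) :=
  subharmonicity_general_general m α hα r ρ r₀ ρ₀ hr₀ hρ₀ hr hρ hcloser hcloseρ hconvr hconvρ c hc
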